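/- Let k = 2K+1 ≥ 5 be an odd integer and let i be an integer with 0 ≤ i ≤ k-2. Then F_k^{(i)} = G_k^{(i)}, i.e. for every s with 1 ≤ s ≤ K-1, (-1) · ∑_{n=0}^{k-2s} C(i, k-2s-n) · C(n+2s-2, n) · B_n = ∑_{n=0}^{k-2s} C(k-2-i, k-2s-n) · C(n+2s-2, n) · B_n. -/

import Mathlib

/-!
Write `S_r(j, m) = ∑_{n ≤ m} C(j, m-n) C(n+r, n) B_n`. With `r = 2s - 2` and `m = k - 2s` odd, the
two sides of the identity are `-S_r(i, m)` and `S_r(m + r - i, m)`. Pascal's rule gives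
`S_r(j+1, m+1) = S_r(j, m+1) + S_r(j, m)`, and from it induction on `j` reduces the reflection
`S_r(m + r - j, m) = (-1)^m S_r(j, m)` to `j = 0`. There both sides are multiples of `C(m+r, m)`,
and the reflection becomes `∑_{n ≤ m} C(m, n) B_n = B_m(1) = (-1)^m B_m`.
-/

open Finset

theorem Nat.choose_sub_mul_choose_add {m n : ℕ} (r : ℕ) (h : n ≤ m) :
    (m + r).choose (m - n) * (n + r).choose n = (m + r).choose m * m.choose n := by
  have hsymm : (m + r).choose (m - n) = (m + r).choose (n + r) :=
    Nat.choose_symm_of_eq_add (by omega)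
  rw [hsymm, Nat.choose_symm_add, Nat.choose_mul (by omega), Nat.add_sub_cancel,
    Nat.add_sub_cancel, ← Nat.choose_symm_add]

theorem sum_range_succ_choose_mul_bernoulli (m : ℕ) :
    ∑ n ∈ range (m + 1), (m.choose n : ℚ) * bernoulli n = bernoulli' m := by
  simpa [Polynomial.bernoulli, Polynomial.eval_finsetSum, mul_comm]
    using Polynomial.bernoulli_eval_one m

def bernoulliBinomialSum (r j m : ℕ) : ℚ :=
  ∑ n ∈ range (m + 1), (j.choose (m - n) : ℚ) * ((n + r).choose n : ℚ) * bernoulli n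

namespace bernoulliBinomialSum

theorem zero_right (r j : ℕ) : bernoulliBinomialSum r j 0 = 1 := by
  simp [bernoulliBinomialSum]

theorem succ_succ (r j m : ℕ) :
    bernoulliBinomialSum r (j + 1) (m + 1) =
      bernoulliBinomialSum r j (m + 1) + bernoulliBinomialSum r j m := by
  have pascal : ∀ n ∈ range (m + 1),
      ((j + 1).choose (m + 1 - n) : ℚ) * ((n + r).choose n : ℚ) * bernoulli n =
        (j.choose (m + 1 - n) : ℚ) * ((n + r).choose n : ℚ) * bernoulli n +
          (j.choose (m - n) : ℚ) * ((n + r).choose n : ℚ) * bernoulli n := by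
    intro n hn
    rw [show m + 1 - n = m - n + 1 by grind, Nat.choose_succ_succ', Nat.cast_add]
    ring
  simp only [bernoulliBinomialSum, sum_range_succ _ (m + 1), sum_congr rfl pascal,
    sum_add_distrib, Nat.sub_self, Nat.choose_zero_right]
  ring

theorem zero_left (r m : ℕ) :
    bernoulliBinomialSum r 0 m = ((m + r).choose m : ℚ) * bernoulli m := by
  rw [bernoulliBinomialSum, sum_range_succ, sum_eq_zero fun n hn => ?_]
  · simp
  · rw [Nat.choose_eq_zero_of_lt (by grind), Nat.cast_zero, zero_mul, zero_mul]

theorem self_add_left (r m : ℕ) :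
    bernoulliBinomialSum r (m + r) m = ((m + r).choose m : ℚ) * bernoulli' m := by
  rw [bernoulliBinomialSum, ← sum_range_succ_choose_mul_bernoulli, mul_sum]
  refine sum_congr rfl fun n hn => ?_
  rw [← mul_assoc, ← Nat.cast_mul, ← Nat.cast_mul,
    Nat.choose_sub_mul_choose_add r (Nat.lt_succ_iff.mp (mem_range.mp hn))]

theorem reflect (r : ℕ) {j m : ℕ} (h : j ≤ m + r) :
    bernoulliBinomialSum r (m + r - j) m = (-1) ^ m * bernoulliBinomialSum r j m := by
  induction j generalizing m with
  | zero =>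
    rw [Nat.sub_zero, self_add_left, zero_left, bernoulli'_eq_bernoulli]
    ring
  | succ j ih =>
    cases m with
    | zero => simp [zero_right]
    | succ m =>
      have pascal := succ_succ r (m + r - j) m
      rw [show m + r - j + 1 = m + 1 + r - j by omega, ih (by omega), ih (by omega)] at pascal
      rw [show m + 1 + r - (j + 1) = m + r - j by omega, succ_succ]
      linear_combination -pascal

end bernoulliBinomialSum

theorem Fpoly_eq_Gpoly_general (K i : ℕ) (hi : i ≤ 2 * K + 1 - 2) :
    ∀ s : ℕ, 1 ≤ s → s ≤ K - 1 →
      (-1 : ℚ) * ∑ n ∈ Finset.range (2 * K + 1 - 2 * s + 1),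
          (Nat.choose i (2 * K + 1 - 2 * s - n) : ℚ)
            * (Nat.choose (n + 2 * s - 2) n : ℚ) * bernoulli n
      = ∑ n ∈ Finset.range (2 * K + 1 - 2 * s + 1),
          (Nat.choose (2 * K + 1 - 2 - i) (2 * K + 1 - 2 * s - n) : ℚ)
            * (Nat.choose (n + 2 * s - 2) n : ℚ) * bernoulli n := by
  intro s hs hsK
  have hr : ∀ n, n + 2 * s - 2 = n + (2 * s - 2) := by omega
  have hj : 2 * K + 1 - 2 - i = (2 * K + 1 - 2 * s) + (2 * s - 2) - i := by omega
  have hodd : Odd (2 * K + 1 - 2 * s) := ⟨K - s, by omega⟩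
  simp only [hr, hj]
  rw [← bernoulliBinomialSum, ← bernoulliBinomialSum,
    bernoulliBinomialSum.reflect _ (by omega), hodd.neg_one_pow]

/-- **`F_k^{(i)} = G_k^{(i)}` (coefficient form).**
For odd `k = 2K+1 ≥ 5` and `0 ≤ i ≤ k-2`, for every `1 ≤ s ≤ K-1`,
`(-1) · ∑_{n=0}^{k-2s} C(i, k-2s-n)·C(n+2s-2, n)·B_n
  = ∑_{n=0}^{k-2s} C(k-2-i, k-2s-n)·C(n+2s-2, n)·B_n`. -/
theorem Fpoly_eq_Gpoly (K i : ℕ) (hK : 2 ≤ K) (hi : i ≤ 2 * K + 1 - 2) :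
    ∀ s : ℕ, 1 ≤ s → s ≤ K - 1 →
      (-1 : ℚ) * ∑ n ∈ Finset.range (2 * K + 1 - 2 * s + 1),
          (Nat.choose i (2 * K + 1 - 2 * s - n) : ℚ)
            * (Nat.choose (n + 2 * s - 2) n : ℚ) * bernoulli n
      = ∑ n ∈ Finset.range (2 * K + 1 - 2 * s + 1),
          (Nat.choose (2 * K + 1 - 2 - i) (2 * K + 1 - 2 * s - n) : ℚ)
            * (Nat.choose (n + 2 * s - 2) n : ℚ) * bernoulli n :=
  Fpoly_eq_Gpoly_general K i hi
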